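/- Let R be a DVR, G a flat affine group scheme of finite type over R with Hopf algebra R[G], and H a closed subgroup cut out by an ideal I. Let V ⊆ R[G] be a finitely generated R-subcomodule of the right-regular representation containing generators of I, and set W = V ∩ I. Then W is saturated in V, and choosing a basis v_1,…,v_s of V with v_1,…,v_r a basis of W and writing Δv_j = Σ_i v_i ⊗ a_{ij}, the ideal J = (a_{ij} : i > r, j ≤ r) equals I. -/

import Mathlib

/-!
Saturation of `V ∩ I` in `V` is torsion-freeness of the flat `R`-module `B ⧸ I`.

For `J ≤ I`: if `j < r` then `vⱼ ∈ I`, so `Δ vⱼ ∈ I ⊗ B + B ⊗ I` and its image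
`∑_{i ≥ r} v̄ᵢ ⊗ āᵢⱼ` in `(B ⧸ I) ⊗ (B ⧸ I)` vanishes. Since the first `r` vectors span
`V ∩ I`, the classes `v̄ᵢ` with `i ≥ r` are linearly independent, and flatness of `B ⧸ I`
forces `āᵢⱼ = 0`. For `I ≤ J`: counitality gives `vⱼ = ∑ᵢ ε(vᵢ) aᵢⱼ`, where `ε(vᵢ) = 0` for
`i < r`, so `V ∩ I ≤ J`, and `V ∩ I` contains generators of `I`.
-/
open TensorProduct

section
variable {R M N P Q : Type*} [CommRing R] [AddCommGroup M] [Module R M] [AddCommGroup N]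
  [Module R N] [AddCommGroup P] [Module R P] [AddCommGroup Q] [Module R Q]

theorem LinearIndependent.eq_zero_of_sum_tmul_eq_zero [Module.Flat R N] {ι : Type*} [Fintype ι]
    {v : ι → M} (hv : LinearIndependent R v) {n : ι → N} (h : ∑ i, v i ⊗ₜ[R] n i = 0) :
    n = 0 := by
  classical
  let b := Module.Basis.span hv
  have hb : ∑ i, b i ⊗ₜ[R] n i = 0 := by
    refine Module.Flat.rTensor_preserves_injective_linearMap _
      (Submodule.injective_subtype _) ?_
    simpa [map_sum, b, Module.Basis.span_apply] using h
  funext i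
  simpa [map_sum, TensorProduct.equivFinsuppOfBasisLeft_apply_tmul_apply, Finsupp.single_apply]
    using congr(TensorProduct.equivFinsuppOfBasisLeft b $hb i)

theorem LinearIndependent.map_compl_of_span_image_eq_inf_ker {ι : Type*} {v : ι → M}
    (hv : LinearIndependent R v) (f : M →ₗ[R] N) {s : Set ι}
    (hs : Submodule.span R (v '' s) = Submodule.span R (Set.range v) ⊓ LinearMap.ker f) :
    LinearIndependent R (fun i : ↥sᶜ => f (v i)) := by
  refine (hv.comp Subtype.val Subtype.val_injective).map ?_
  rw [Set.range_comp, Subtype.range_coe, Submodule.disjoint_def]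
  intro x hxc hxker
  have hxs : x ∈ Submodule.span R (v '' s) :=
    hs ▸ ⟨Submodule.span_mono (Set.image_subset_range v _) hxc, hxker⟩
  exact Submodule.disjoint_def.mp (hv.disjoint_span_image disjoint_compl_left) x hxc hxs

theorem TensorProduct.map_eq_zero_of_mem_range_sup_range {M' : Submodule R M} {N' : Submodule R N}
    {f : M →ₗ[R] P} {g : N →ₗ[R] Q} (hf : M' ≤ LinearMap.ker f) (hg : N' ≤ LinearMap.ker g)
    {x : M ⊗[R] N} (hx : x ∈ LinearMap.range (TensorProduct.map M'.subtype LinearMap.id) ⊔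
      LinearMap.range (TensorProduct.map LinearMap.id N'.subtype)) :
    map f g x = 0 := by
  have hf0 : f ∘ₗ M'.subtype = 0 := by ext ⟨m, hm⟩; exact hf hm
  have hg0 : g ∘ₗ N'.subtype = 0 := by ext ⟨n, hn⟩; exact hg hn
  refine (sup_le ?_ ?_ : _ ≤ LinearMap.ker (map f g)) hx
  · rintro _ ⟨t, rfl⟩
    rw [LinearMap.mem_ker, ← LinearMap.comp_apply, ← map_comp, hf0, map_zero_left,
      LinearMap.zero_apply]
  · rintro _ ⟨t, rfl⟩
    rw [LinearMap.mem_ker, ← LinearMap.comp_apply, ← map_comp, hg0, map_zero_right,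
      LinearMap.zero_apply]

end

theorem Ideal.mem_of_smul_mem_of_flat_quotient {R B : Type*} [CommRing R] [IsDomain R]
    [CommRing B] [Algebra R B] {I : Ideal B} [Module.Flat R (B ⧸ I)] {c : R} (hc : c ≠ 0)
    {x : B} (hx : c • x ∈ I) : x ∈ I := by
  rw [← Ideal.Quotient.eq_zero_iff_mem, ← Ideal.Quotient.mkₐ_eq_mk R, map_smul,
    smul_eq_zero_iff_right hc] at hx
  rwa [← Ideal.Quotient.eq_zero_iff_mem, ← Ideal.Quotient.mkₐ_eq_mk R]

theorem Ideal.Quotient.ker_mkₐ_toLinearMap {R B : Type*} [CommRing R] [CommRing B] [Algebra R B]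
    (I : Ideal B) :
    LinearMap.ker (Ideal.Quotient.mkₐ R I).toLinearMap = I.restrictScalars R := by
  ext x; simp [Ideal.Quotient.eq_zero_iff_mem]

theorem Ideal.mem_of_sum_tmul_mem_sup_range {R B : Type*} [CommRing R] [CommRing B] [Algebra R B]
    {I : Ideal B} [Module.Flat R (B ⧸ I)] {ι : Type*} [Fintype ι] {v a : ι → B} {s : Set ι}
    (hv : LinearIndependent R fun i : ↥sᶜ => Ideal.Quotient.mkₐ R I (v i))
    (hvs : ∀ i ∈ s, v i ∈ I)
    (h : ∑ i, v i ⊗ₜ[R] a i ∈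
      LinearMap.range (TensorProduct.map (I.restrictScalars R).subtype LinearMap.id) ⊔
      LinearMap.range (TensorProduct.map LinearMap.id (I.restrictScalars R).subtype))
    {i : ι} (hi : i ∉ s) : a i ∈ I := by
  classical
  set π := (Ideal.Quotient.mkₐ R I).toLinearMap
  have hπ := (Ideal.Quotient.ker_mkₐ_toLinearMap (R := R) I).ge
  have hsum := TensorProduct.map_eq_zero_of_mem_range_sup_range hπ hπ h
  rw [map_sum, ← Fintype.sum_subtype_add_sum_subtype (· ∈ s)] at hsum
  have hs0 : ∑ j : ↥s, TensorProduct.map π π (v j ⊗ₜ[R] a j) = 0 :=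
    Finset.sum_eq_zero fun j _ => by
      rw [map_tmul, show π (v j) = 0 from hπ (hvs j j.2), zero_tmul]
  rw [hs0, zero_add] at hsum
  have := congr_fun (hv.eq_zero_of_sum_tmul_eq_zero (n := fun j : ↥sᶜ => π (a j)) hsum) ⟨i, hi⟩
  exact Ideal.Quotient.eq_zero_iff_mem.mp this

theorem stmt18 {R : Type} [CommRing R] [IsDomain R]
    {B : Type} [CommRing B] [HopfAlgebra R B]
    (I : Ideal B) [Module.Flat R (B ⧸ I)]
    (hcounit : ∀ a ∈ I, Coalgebra.counit (R := R) (A := B) a = (0 : R))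
    (hcomul : ∀ a ∈ I, Coalgebra.comul (R := R) (A := B) a ∈
        LinearMap.range
          (TensorProduct.map (I.restrictScalars R).subtype (LinearMap.id : B →ₗ[R] B)) ⊔
        LinearMap.range
          (TensorProduct.map (LinearMap.id : B →ₗ[R] B) (I.restrictScalars R).subtype))
    (V : Submodule R B)
    (hVgen : ∃ S : Set B, S ⊆ ↑V ∧ Ideal.span S = I) :
    (∀ x ∈ V, ∀ c : R, c ≠ 0 → c • x ∈ V ⊓ I.restrictScalars R →
        x ∈ V ⊓ I.restrictScalars R) ∧
    (∀ (s r : ℕ) (vs : Fin s → B), LinearIndependent R vs →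
        Submodule.span R (Set.range vs) = V →
        Submodule.span R (vs '' {i : Fin s | (i : ℕ) < r}) = V ⊓ I.restrictScalars R →
        ∀ a : Fin s → Fin s → B,
          (∀ j : Fin s, Coalgebra.comul (R := R) (A := B) (vs j) =
            ∑ i : Fin s, vs i ⊗ₜ[R] a i j) →
          Ideal.span {x : B | ∃ i j : Fin s, r ≤ (i : ℕ) ∧ (j : ℕ) < r ∧ a i j = x} = I) := by
  refine ⟨fun x hx c hc hcx => ⟨hx, Ideal.mem_of_smul_mem_of_flat_quotient hc hcx.2⟩, ?_⟩
  intro s r vs hvs hV hW a ha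
  set J := Ideal.span {x : B | ∃ i j : Fin s, r ≤ (i : ℕ) ∧ (j : ℕ) < r ∧ a i j = x}
  have hWI : ∀ j : Fin s, (j : ℕ) < r → vs j ∈ I := fun j hj =>
    (hW ▸ Submodule.subset_span ⟨j, hj, rfl⟩ : vs j ∈ V ⊓ I.restrictScalars R).2
  have hq := hvs.map_compl_of_span_image_eq_inf_ker (Ideal.Quotient.mkₐ R I).toLinearMap
    (s := {i : Fin s | (i : ℕ) < r}) (by rw [hW, hV, Ideal.Quotient.ker_mkₐ_toLinearMap])
  refine le_antisymm (Ideal.span_le.2 ?_) ?_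
  · rintro _ ⟨i, j, hi, hj, rfl⟩
    exact Ideal.mem_of_sum_tmul_mem_sup_range (a := (a · j)) hq hWI
      (ha j ▸ hcomul _ (hWI j hj)) hi.not_gt
  · have hWJ : Submodule.span R (vs '' {i : Fin s | (i : ℕ) < r}) ≤ J.restrictScalars R := by
      refine Submodule.span_le.2 ?_
      rintro _ ⟨j, hj, rfl⟩
      rw [← Coalgebra.sum_counit_smul ⟨Finset.univ, vs, (a · j), (ha j).symm⟩]
      refine Submodule.sum_mem _ fun i _ => ?_
      rcases lt_or_ge (i : ℕ) r with hi | hi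
      · simp [hcounit _ (hWI i hi)]
      · exact Submodule.smul_mem _ _ (Ideal.subset_span ⟨i, j, hi, hj, rfl⟩)
    obtain ⟨S, hSV, hSI⟩ := hVgen
    rw [← hSI, Ideal.span_le]
    intro x hx
    exact hWJ (hW ▸ ⟨hSV hx, hSI ▸ Ideal.subset_span hx⟩)
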